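/- arXiv:math/0407096 — 2 statements merged into one kernel-verified Lean document; each statement's English description precedes it below -/
import Mathlib

section
/- For each tree t with n leaves and each tree t', the word w_t, acting letterwise via the operators A_α, maps the right vine ⟨n⟩ to t, and the word w_t* maps ⟨n, t'⟩ (the tree ⟨•,…,•,t'⟩ with n single leaves followed by t') to t·t'. -/
/-- Finite rooted binary trees. -/
inductive BTree : Type
  | leaf : BTree
  | node : BTree → BTree → BTree

/-- Addresses: finite words over `{0,1}`, with `false` = 0 (left) and `true` = 1
(right). -/
abbrev Addr := List Bool

/-- The associativity operator `A`: maps `t₁·(t₂·t₃)` to `(t₁·t₂)·t₃`. -/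
def opA : BTree → Option BTree
  | .node t₁ (.node t₂ t₃) => some (.node (.node t₁ t₂) t₃)
  | _ => none

/-- `applyAt α f` applies `f` to the `α`-subtree of its argument. -/
def applyAt : Addr → (BTree → Option BTree) → BTree → Option BTree
  | [], f => f
  | false :: α, f => fun t => match t with
      | .node t₁ t₂ => (applyAt α f t₁).map (fun s => .node s t₂)
      | _ => none
  | true :: α, f => fun t => match t with
      | .node t₁ t₂ => (applyAt α f t₂).map (fun s => .node t₁ s)
      | _ => none

/-- Words in the letters `A_α`, encoded by the list of the addresses `α`. -/
abbrev Word := List Addr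

/-- Letterwise action of a word on a tree, from left to right. -/
def run : Word → BTree → Option BTree
  | [], t => some t
  | α :: w, t => (applyAt α opA t).bind (run w)

/-- `∂w`: prefix each index of the word `w` by the letter 1. -/
def shiftW (w : Word) : Word := w.map (fun α => true :: α)

/-- The pair of words `(w_t, w_t*)`, defined inductively by `w_t = w_t* = ε` for a
single leaf, and `w_{t₁t₂} = w_{t₁}* · ∂w_{t₂}`, `w_{t₁t₂}* = w_{t₁}* · ∂w_{t₂}* · A`. -/
def wtPair : BTree → Word × Word
  | .leaf => ([], [])
  | .node t₁ t₂ =>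
      ((wtPair t₁).2 ++ shiftW (wtPair t₂).1,
       (wtPair t₁).2 ++ shiftW (wtPair t₂).2 ++ [([] : Addr)])

/-- The word `w_t`. -/
def wt (t : BTree) : Word := (wtPair t).1

/-- The word `w_t*`. -/
def wts (t : BTree) : Word := (wtPair t).2

/-- The number of leaves (size) of a tree. -/
def size : BTree → ℕ
  | .leaf => 1
  | .node t₁ t₂ => size t₁ + size t₂

/-- `vineW n t` is the tree `⟨•,…,•,t⟩` with `n` single leaves followed by `t`;
in particular the right vine `⟨n⟩` is `vineW (n-1) leaf`. -/
def vineW : ℕ → BTree → BTree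
  | 0, t => t
  | n + 1, t => .node .leaf (vineW n t)

/-!
By induction on `t = t₁·t₂` with `nᵢ = size tᵢ`: since `⟨n₁ + n₂, t'⟩ = ⟨n₁, ⟨n₂, t'⟩⟩`,
the prefix `w_{t₁}*` turns it into `t₁·⟨n₂, t'⟩`, then `∂w_{t₂}*` acts on the right
subtree to give `t₁·(t₂·t')`, and the final letter `A` yields `(t₁·t₂)·t'`. Likewise
`w_t` turns `⟨n₁ + n₂⟩ = ⟨n₁, ⟨n₂⟩⟩` into `t₁·⟨n₂⟩` and then into `t₁·t₂`.
-/

lemma run_append (w₁ w₂ : Word) (t : BTree) :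
    run (w₁ ++ w₂) t = (run w₁ t).bind (run w₂) := by
  induction w₁ generalizing t with
  | nil => rfl
  | cons α w ih =>
    simp only [List.cons_append, run, Option.bind_assoc]
    cases applyAt α opA t <;> simp [ih]

lemma run_shiftW_node (w : Word) (t₁ t₂ : BTree) :
    run (shiftW w) (.node t₁ t₂) = (run w t₂).map (.node t₁) := by
  induction w generalizing t₂ with
  | nil => rfl
  | cons α w ih =>
    simp only [shiftW, List.map_cons, run, applyAt]
    cases applyAt α opA t₂ <;> simp [← ih, shiftW]

lemma run_opA_root (t₁ t₂ t₃ : BTree) :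
    run [[]] (.node t₁ (.node t₂ t₃)) = some (.node (.node t₁ t₂) t₃) := rfl

lemma wt_node (t₁ t₂ : BTree) : wt (.node t₁ t₂) = wts t₁ ++ shiftW (wt t₂) := rfl

lemma wts_node (t₁ t₂ : BTree) :
    wts (.node t₁ t₂) = wts t₁ ++ shiftW (wts t₂) ++ [[]] := rfl

lemma vineW_add (m n : ℕ) (t : BTree) : vineW (m + n) t = vineW m (vineW n t) := by
  induction m with
  | zero => simp [vineW]
  | succ m ih => simp [Nat.succ_add, vineW, ih]

lemma one_le_size (t : BTree) : 1 ≤ size t := by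
  induction t with
  | leaf => rfl
  | node _ _ ih₁ _ => simp only [size]; omega

lemma run_wts_vineW (t t' : BTree) :
    run (wts t) (vineW (size t) t') = some (.node t t') := by
  induction t generalizing t' with
  | leaf => rfl
  | node t₁ t₂ ih₁ ih₂ =>
    rw [size, vineW_add, wts_node, run_append, run_append, ih₁, Option.bind_some,
      run_shiftW_node, ih₂, Option.map_some, Option.bind_some, run_opA_root]

lemma run_wt_vineW (t : BTree) : run (wt t) (vineW (size t - 1) .leaf) = some t := by
  induction t with
  | leaf => rfl
  | node t₁ t₂ _ ih₂ =>
    have hsize : size (.node t₁ t₂) - 1 = size t₁ + (size t₂ - 1) := by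
      have := one_le_size t₂
      simp only [size]; omega
    rw [hsize, vineW_add, wt_node, run_append, run_wts_vineW, Option.bind_some,
      run_shiftW_node, ih₂, Option.map_some]

/-- Lemma 2.11: for each tree `t` of size `n` and each tree `t'`, the word `w_t`
constructs `t` from the right vine `⟨n⟩`, and the word `w_t*` constructs `t·t'`
from `⟨n, t'⟩`. -/
theorem stmt7 (t t' : BTree) :
    run (wt t) (vineW (size t - 1) .leaf) = some t ∧
    run (wts t) (vineW (size t) t') = some (.node t t') :=
  ⟨run_wt_vineW t, run_wts_vineW t t'⟩
end

section
/- Let t, t' be trees and α an address such that t' = t•A_α (the operator A_α maps t to t'). Then the words w_{t'} and w_t·A_α represent the same element of the group presented by generators {A_β : β an address} and relations R_A, and likewise the words w_{t'}* and w_t*·A_{0α} represent the same element of that presented group. -/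
/-- The relations `R_A`, as relators in the free group on the generators `A_α`
(a generator being encoded by its address `α`): for all addresses `α, β, γ`,
`A_{γ0α}·A_{γ1β} = A_{γ1β}·A_{γ0α}`, `A_{γ11α}·A_γ = A_γ·A_{γ1α}`,
`A_{γ10α}·A_γ = A_γ·A_{γ01α}`, `A_{γ0α}·A_γ = A_γ·A_{γ00α}`, and the pentagon
relations `A_γ·A_γ = A_{γ1}·A_γ·A_{γ0}`. -/
def relsA : Set (FreeGroup Addr) :=
  {x | ∃ γ : Addr,
    (∃ α β : Addr, x = FreeGroup.of (γ ++ false :: α) * FreeGroup.of (γ ++ true :: β) *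
        (FreeGroup.of (γ ++ true :: β) * FreeGroup.of (γ ++ false :: α))⁻¹) ∨
    (∃ α : Addr, x = FreeGroup.of (γ ++ true :: true :: α) * FreeGroup.of γ *
        (FreeGroup.of γ * FreeGroup.of (γ ++ true :: α))⁻¹) ∨
    (∃ α : Addr, x = FreeGroup.of (γ ++ true :: false :: α) * FreeGroup.of γ *
        (FreeGroup.of γ * FreeGroup.of (γ ++ false :: true :: α))⁻¹) ∨
    (∃ α : Addr, x = FreeGroup.of (γ ++ false :: α) * FreeGroup.of γ *
        (FreeGroup.of γ * FreeGroup.of (γ ++ false :: false :: α))⁻¹) ∨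
    (x = FreeGroup.of γ * FreeGroup.of γ *
        (FreeGroup.of (γ ++ [true]) * FreeGroup.of γ * FreeGroup.of (γ ++ [false]))⁻¹)}

/-- Evaluation of a word in the letters `A_α` in the group presented by the
generators `A_α` and the relations `R_A`. -/
def evP (w : Word) : PresentedGroup relsA :=
  (w.map (fun α => (PresentedGroup.of α : PresentedGroup relsA))).prod

/-
Induction on `t`. Write `S` (`shiftHom`) for the endomorphism `A_β ↦ A_{1β}` of the presented
group (well defined since `R_A` is stable under prefixing addresses), so that
`w_{t₁t₂} = w_{t₁}* · S(w_{t₂})` and `w_{t₁t₂}* = w_{t₁}* · S(w_{t₂}*) · A`.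
If `A_α` acts inside a subtree, the induction hypothesis for that subtree is carried past the
remaining factors by the commutation relations of `R_A`. If it acts at the root, the claim
follows from the identities `A · S x = S (S x) · A` and `A · A = A_1 · A · A_0`.
-/

open PresentedGroup

local notation "P" => PresentedGroup relsA

theorem of_left_mul_of_right (γ α β : Addr) :
    (of (γ ++ false :: α) * of (γ ++ true :: β) : P) =
      of (γ ++ true :: β) * of (γ ++ false :: α) :=
  mk_eq_mk_of_mul_inv_mem ⟨γ, Or.inl ⟨α, β, rfl⟩⟩

theorem of_rightRight_mul_of (γ α : Addr) :
    (of (γ ++ true :: true :: α) * of γ : P) = of γ * of (γ ++ true :: α) :=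
  mk_eq_mk_of_mul_inv_mem ⟨γ, Or.inr (Or.inl ⟨α, rfl⟩)⟩

theorem of_rightLeft_mul_of (γ α : Addr) :
    (of (γ ++ true :: false :: α) * of γ : P) = of γ * of (γ ++ false :: true :: α) :=
  mk_eq_mk_of_mul_inv_mem ⟨γ, Or.inr (Or.inr (Or.inl ⟨α, rfl⟩))⟩

theorem of_left_mul_of (γ α : Addr) :
    (of (γ ++ false :: α) * of γ : P) = of γ * of (γ ++ false :: false :: α) :=
  mk_eq_mk_of_mul_inv_mem ⟨γ, Or.inr (Or.inr (Or.inr (Or.inl ⟨α, rfl⟩)))⟩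

theorem of_mul_of_pentagon (γ : Addr) :
    (of γ * of γ : P) = of (γ ++ [true]) * of γ * of (γ ++ [false]) :=
  mk_eq_mk_of_mul_inv_mem ⟨γ, Or.inr (Or.inr (Or.inr (Or.inr rfl)))⟩


theorem map_cons_mem_relsA (b : Bool) {r : FreeGroup Addr} (hr : r ∈ relsA) :
    FreeGroup.map (List.cons b) r ∈ relsA := by
  obtain ⟨γ, hr⟩ := hr
  refine ⟨b :: γ, ?_⟩
  rcases hr with ⟨α, β, rfl⟩ | ⟨α, rfl⟩ | ⟨α, rfl⟩ | ⟨α, rfl⟩ | rfl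
  · exact Or.inl ⟨α, β, by simp⟩
  · exact Or.inr <| Or.inl ⟨α, by simp⟩
  · exact Or.inr <| Or.inr <| Or.inl ⟨α, by simp⟩
  · exact Or.inr <| Or.inr <| Or.inr <| Or.inl ⟨α, by simp⟩
  · exact Or.inr <| Or.inr <| Or.inr <| Or.inr <| by simp

def shiftHom : P →* P :=
  toGroup (f := fun a => of (true :: a)) fun r hr => by
    have hlift : FreeGroup.lift (fun a => (of (true :: a) : P)) =
        (mk relsA).comp (FreeGroup.map (List.cons true)) :=
      FreeGroup.ext_hom _ _ fun _ => rfl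
    rw [hlift, MonoidHom.comp_apply]
    exact one_of_mem (map_cons_mem_relsA true hr)

@[simp] theorem shiftHom_of (a : Addr) : shiftHom (of a) = of (true :: a) :=
  toGroup.of _

theorem evP_append (u v : Word) : evP (u ++ v) = evP u * evP v := by
  simp [evP]

theorem evP_singleton (a : Addr) : evP [a] = of a := by
  simp [evP]

theorem evP_shiftW (w : Word) : evP (shiftW w) = shiftHom (evP w) := by
  induction w with
  | nil => simp [evP, shiftW]
  | cons a w ih => simpa [evP, shiftW] using ih

theorem evP_wt_node (t₁ t₂ : BTree) :
    evP (wt (.node t₁ t₂)) = evP (wts t₁) * shiftHom (evP (wt t₂)) := by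
  simp only [wt, wts, wtPair, evP_append, evP_shiftW]

theorem evP_wts_node (t₁ t₂ : BTree) :
    evP (wts (.node t₁ t₂)) = evP (wts t₁) * shiftHom (evP (wts t₂)) * of [] := by
  simp only [wts, wtPair, evP_append, evP_shiftW, evP_singleton]

theorem of_nil_mul_shiftHom (x : P) : of [] * shiftHom x = shiftHom (shiftHom x) * of [] := by
  have hconj : (MulAut.conj (of [] : P)).toMonoidHom.comp shiftHom = shiftHom.comp shiftHom :=
    PresentedGroup.ext fun a => by
      simpa [mul_inv_eq_iff_eq_mul] using (of_rightRight_mul_of [] a).symm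
  simpa [mul_inv_eq_iff_eq_mul] using DFunLike.congr_fun hconj x

theorem commute_of_left_shiftHom (δ : Addr) (x : P) : Commute (of (false :: δ)) (shiftHom x) := by
  have hconj : (MulAut.conj (of (false :: δ) : P)).toMonoidHom.comp shiftHom = shiftHom :=
    PresentedGroup.ext fun a => by
      simpa [mul_inv_eq_iff_eq_mul] using of_left_mul_of_right [] δ a
  simpa [Commute, SemiconjBy, mul_inv_eq_iff_eq_mul] using DFunLike.congr_fun hconj x

theorem evP_wt_assoc (t₁ t₂ t₃ : BTree) :
    evP (wt (.node (.node t₁ t₂) t₃)) = evP (wt (.node t₁ (.node t₂ t₃))) * of [] ∧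
    evP (wts (.node (.node t₁ t₂) t₃)) = evP (wts (.node t₁ (.node t₂ t₃))) * of [false] := by
  simp only [evP_wt_node, evP_wts_node, map_mul, shiftHom_of, mul_assoc]
  constructor
  · rw [of_nil_mul_shiftHom]
  · rw [← mul_assoc (of []), of_nil_mul_shiftHom, mul_assoc, of_mul_of_pentagon]
    rfl

theorem evP_wt_node_left {t₁ t₁' : BTree} (t₂ : BTree) {β : Addr}
    (h : evP (wts t₁') = evP (wts t₁) * of (false :: β)) :
    evP (wt (.node t₁' t₂)) = evP (wt (.node t₁ t₂)) * of (false :: β) ∧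
    evP (wts (.node t₁' t₂)) = evP (wts (.node t₁ t₂)) * of (false :: false :: β) := by
  simp only [evP_wt_node, evP_wts_node, h, mul_assoc]
  constructor
  · rw [commute_of_left_shiftHom]
  · rw [← mul_assoc (of (false :: β)), commute_of_left_shiftHom, mul_assoc,
      show of (false :: β) * of [] = (of [] * of (false :: false :: β) : P) from
        of_left_mul_of [] β]

theorem evP_wt_node_right (t₁ : BTree) {t₂ t₂' : BTree} {β : Addr}
    (h : evP (wt t₂') = evP (wt t₂) * of β)
    (hs : evP (wts t₂') = evP (wts t₂) * of (false :: β)) :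
    evP (wt (.node t₁ t₂')) = evP (wt (.node t₁ t₂)) * of (true :: β) ∧
    evP (wts (.node t₁ t₂')) = evP (wts (.node t₁ t₂)) * of (false :: true :: β) := by
  simp only [evP_wt_node, evP_wts_node, h, hs, map_mul, shiftHom_of, mul_assoc, true_and]
  rw [show of (true :: false :: β) * of [] = (of [] * of (false :: true :: β) : P) from
    of_rightLeft_mul_of [] β]

theorem applyAt_opA_leaf (α : Addr) : applyAt α opA .leaf = none := by
  rcases α with _ | ⟨_ | _, α⟩ <;> rfl

/-- Lemma 2.12: if `t' = t • A_α`, then `w_{t'} ≡_{R_A} w_t · A_α` and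
`w_{t'}* ≡_{R_A} w_t* · A_{0α}`. -/
theorem stmt8 (t t' : BTree) (α : Addr) (h : applyAt α opA t = some t') :
    evP (wt t') = evP (wt t ++ [α]) ∧
    evP (wts t') = evP (wts t ++ [false :: α]) := by
  simp only [evP_append, evP_singleton]
  induction t generalizing t' α with
  | leaf => simp [applyAt_opA_leaf] at h
  | node t₁ t₂ ih₁ ih₂ =>
    rcases α with _ | ⟨_ | _, β⟩
    · obtain ⟨t₂, t₃, rfl, rfl⟩ : ∃ t₂' t₃, t₂ = .node t₂' t₃ ∧ t' = .node (.node t₁ t₂') t₃ := by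
        cases t₂ <;> simp_all [applyAt, opA]
      exact evP_wt_assoc t₁ t₂ t₃
    · obtain ⟨t₁', h₁, rfl⟩ := Option.map_eq_some_iff.mp h
      exact evP_wt_node_left t₂ (ih₁ t₁' β h₁).2
    · obtain ⟨t₂', h₂, rfl⟩ := Option.map_eq_some_iff.mp h
      exact evP_wt_node_right t₁ (ih₂ t₂' β h₂).1 (ih₂ t₂' β h₂).2
end
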